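/- arXiv:1801.08516 — 11 statements merged into one kernel-verified Lean document; each statement's English description precedes it below -/
import Mathlib

section
/- The function f satisfies |f(t)| ≤ 2^(1/4) |t|^(1/2) for all real t. -/
/-! Since `(f²)' = 2 f (1 + 2 f²)^(-1/2)` and `4 y² ≤ 2 (1 + 2 y²)`, the derivative of `f²` is
bounded by `√2`, so `f(t)² ≤ √2 t` for `t ≥ 0` by the mean value inequality. Oddness of `f`
handles `t < 0`. -/

open Real Set

lemma abs_two_mul_mul_rpow_neg_half_le (y : ℝ) :
    |2 * y * (1 + 2 * y ^ 2) ^ (-(1/2) : ℝ)| ≤ √2 := by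
  have hpos : (0 : ℝ) < 1 + 2 * y ^ 2 := by positivity
  have hsqrt : (0 : ℝ) < √(1 + 2 * y ^ 2) := sqrt_pos.mpr hpos
  rw [rpow_neg hpos.le, ← sqrt_eq_rpow, abs_mul, abs_inv, abs_of_pos hsqrt,
    ← div_eq_mul_inv, div_le_iff₀ hsqrt, ← sqrt_mul zero_le_two, ← sqrt_sq_eq_abs]
  exact sqrt_le_sqrt (by nlinarith)

lemma sq_le_sqrt_two_mul {f : ℝ → ℝ} (hf0 : f 0 = 0)
    (hf' : ∀ t : ℝ, 0 ≤ t → HasDerivAt f ((1 + 2 * f t ^ 2) ^ (-(1/2) : ℝ)) t)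
    {t : ℝ} (ht : 0 ≤ t) : f t ^ 2 ≤ √2 * t := by
  have hderiv : ∀ s ∈ Icc 0 t, HasDerivWithinAt (fun s => f s ^ 2)
      (2 * f s * (1 + 2 * f s ^ 2) ^ (-(1/2) : ℝ)) (Icc 0 t) s := fun s hs =>
    ((hf' s hs.1).pow 2).hasDerivWithinAt.congr_deriv (by ring)
  have hmvt := norm_image_sub_le_of_norm_deriv_le_segment' hderiv
    (fun s _ => abs_two_mul_mul_rpow_neg_half_le (f s)) t (right_mem_Icc.mpr ht)
  rw [hf0, zero_pow two_ne_zero, sub_zero, sub_zero, norm_eq_abs] at hmvt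
  exact (le_abs_self _).trans hmvt

lemma abs_le_two_rpow_quarter_mul_rpow_half {y t : ℝ} (h : y ^ 2 ≤ √2 * t) :
    |y| ≤ (2 : ℝ) ^ ((1 : ℝ)/4) * t ^ ((1 : ℝ)/2) := by
  have h2 : (2 : ℝ) ^ ((1 : ℝ)/4) = √(√2) := by
    rw [sqrt_eq_rpow, sqrt_eq_rpow, ← rpow_mul zero_le_two]
    norm_num
  rw [h2, ← sqrt_eq_rpow, ← sqrt_mul (sqrt_nonneg 2), ← sqrt_sq_eq_abs]
  exact sqrt_le_sqrt h

lemma abs_apply_abs_of_odd {f : ℝ → ℝ} (hodd : ∀ t : ℝ, f (-t) = -f t) (t : ℝ) :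
    |f (|t|)| = |f t| := by
  rcases abs_choice t with h | h <;> simp [h, hodd]

theorem stmt_1 (f : ℝ → ℝ) (hf0 : f 0 = 0) (hodd : ∀ t : ℝ, f (-t) = -f t)
    (hf1 : ∀ t : ℝ, 0 ≤ t → HasDerivAt f ((1 + 2 * f t ^ 2) ^ (-(1/2) : ℝ)) t) :
    ∀ t : ℝ, |f t| ≤ (2 : ℝ) ^ ((1:ℝ)/4) * |t| ^ ((1:ℝ)/2) := by
  intro t
  rw [← abs_apply_abs_of_odd hodd t]
  exact abs_le_two_rpow_quarter_mul_rpow_half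
    (sq_le_sqrt_two_mul hf0 hf1 (abs_nonneg t))
end

section
/- For all t > 0, f(t)/2 < t·f'(t) < f(t), and the reverse inequalities hold for t < 0. -/
/-!
With `s y = √(1 + 2 y²)` the equation reads `f' = 1 / s(f)` on `t ≥ 0`, so for `t > 0` the claim
is `f s(f) / 2 < t < f s(f)`. As `(y s(y))' = (1 + 4 y²) / s(y)`, the differences `f s(f) - t` and
`2 t - f s(f)` have derivatives `2 f² / (1 + 2 f²)` and `1 / (1 + 2 f²)`; both vanish at `0` and
increase on `t ≥ 0`, the first because `f > 0` for `t > 0`. Oddness of `f` makes `f'` even, which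
gives the case `t < 0`.
-/

open Real

theorem Function.Odd.deriv_even {𝕜 F : Type*} [NontriviallyNormedField 𝕜] [NormedAddCommGroup F]
    [NormedSpace 𝕜 F] {f : 𝕜 → F} (hf : f.Odd) : (deriv f).Even := by
  intro x
  have hf' : f = fun y ↦ -f (-y) := funext fun y ↦ by rw [hf, neg_neg]
  conv_rhs => rw [hf']
  rw [deriv.fun_neg, deriv_comp_neg, neg_neg]

lemma pos_of_hasDerivAt_of_pos {g g' : ℝ → ℝ} (hg0 : g 0 = 0)
    (hg : ∀ x, 0 ≤ x → HasDerivAt g (g' x) x) (hg' : ∀ x, 0 < x → 0 < g' x)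
    {t : ℝ} (ht : 0 < t) : 0 < g t := by
  have hmono : StrictMonoOn g (Set.Ici 0) := by
    refine strictMonoOn_of_hasDerivWithinAt_pos (f' := g') (convex_Ici 0)
      (fun x hx ↦ (hg x hx).continuousAt.continuousWithinAt) (fun x hx ↦ ?_) (fun x hx ↦ ?_)
    all_goals rw [interior_Ici] at hx
    · exact (hg x hx.le).hasDerivWithinAt
    · exact hg' x hx
  simpa [hg0] using hmono (Set.mem_Ici.mpr le_rfl) ht.le ht

lemma hasDerivAt_mul_sqrt_one_add_two_mul_sq (y : ℝ) :
    HasDerivAt (fun y ↦ y * √(1 + 2 * y ^ 2)) ((1 + 4 * y ^ 2) / √(1 + 2 * y ^ 2)) y := by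
  have hpos : 0 < 1 + 2 * y ^ 2 := by positivity
  have hsqrt : HasDerivAt (fun y ↦ √(1 + 2 * y ^ 2)) (2 * y / √(1 + 2 * y ^ 2)) y := by
    convert (((hasDerivAt_pow 2 y).const_mul 2).const_add 1).sqrt hpos.ne' using 1
    ring
  refine ((hasDerivAt_id' y).mul hsqrt).congr_deriv ?_
  field_simp
  rw [sq_sqrt hpos.le]
  ring

section ODE

variable {f : ℝ → ℝ}

lemma hasDerivAt_mul_sqrt_comp_of_ode (hf : ∀ t, 0 ≤ t → HasDerivAt f (√(1 + 2 * f t ^ 2))⁻¹ t)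
    {x : ℝ} (hx : 0 ≤ x) :
    HasDerivAt (fun x ↦ f x * √(1 + 2 * f x ^ 2)) ((1 + 4 * f x ^ 2) / (1 + 2 * f x ^ 2)) x := by
  have hpos : 0 < 1 + 2 * f x ^ 2 := by positivity
  refine ((hasDerivAt_mul_sqrt_one_add_two_mul_sq (f x)).comp x (hf x hx)).congr_deriv ?_
  rw [← div_eq_mul_inv, div_div, mul_self_sqrt hpos.le]

lemma pos_of_ode (hf0 : f 0 = 0) (hf : ∀ t, 0 ≤ t → HasDerivAt f (√(1 + 2 * f t ^ 2))⁻¹ t)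
    {t : ℝ} (ht : 0 < t) : 0 < f t :=
  pos_of_hasDerivAt_of_pos hf0 hf (fun x _ ↦ by positivity) ht

lemma lt_mul_sqrt_of_ode (hf0 : f 0 = 0)
    (hf : ∀ t, 0 ≤ t → HasDerivAt f (√(1 + 2 * f t ^ 2))⁻¹ t) {t : ℝ} (ht : 0 < t) :
    t < f t * √(1 + 2 * f t ^ 2) := by
  have key := pos_of_hasDerivAt_of_pos (g := fun x ↦ f x * √(1 + 2 * f x ^ 2) - x)
    (by simp [hf0]) (fun x hx ↦ (hasDerivAt_mul_sqrt_comp_of_ode hf hx).sub (hasDerivAt_id x))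
    (fun x hx ↦ ?_) ht
  · simpa using key
  have hfx := pos_of_ode hf0 hf hx
  rw [sub_pos, one_lt_div (by positivity)]
  nlinarith

lemma mul_sqrt_lt_of_ode (hf0 : f 0 = 0)
    (hf : ∀ t, 0 ≤ t → HasDerivAt f (√(1 + 2 * f t ^ 2))⁻¹ t) {t : ℝ} (ht : 0 < t) :
    f t * √(1 + 2 * f t ^ 2) < 2 * t := by
  have key := pos_of_hasDerivAt_of_pos (g := fun x ↦ 2 * x - f x * √(1 + 2 * f x ^ 2))
    (by simp [hf0])
    (fun x hx ↦ ((hasDerivAt_id x).const_mul 2).sub (hasDerivAt_mul_sqrt_comp_of_ode hf hx))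
    (fun x _ ↦ ?_) ht
  · simpa using key
  rw [mul_one, sub_pos, div_lt_iff₀ (by positivity)]
  nlinarith [sq_nonneg (f x)]

end ODE

theorem stmt_2 (f : ℝ → ℝ) (hf0 : f 0 = 0) (hodd : ∀ t : ℝ, f (-t) = -f t)
    (hf1 : ∀ t : ℝ, 0 ≤ t → HasDerivAt f ((1 + 2 * f t ^ 2) ^ (-(1/2) : ℝ)) t) :
    (∀ t : ℝ, 0 < t → f t / 2 < t * deriv f t ∧ t * deriv f t < f t) ∧
    (∀ t : ℝ, t < 0 → f t < t * deriv f t ∧ t * deriv f t < f t / 2) := by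
  have hf : ∀ t, 0 ≤ t → HasDerivAt f (√(1 + 2 * f t ^ 2))⁻¹ t := fun t ht ↦ by
    rw [sqrt_eq_rpow, ← rpow_neg (by positivity)]
    exact hf1 t ht
  have hpos : ∀ t : ℝ, 0 < t → f t / 2 < t * deriv f t ∧ t * deriv f t < f t := by
    intro t ht
    have hs : 0 < √(1 + 2 * f t ^ 2) := by positivity
    rw [(hf t ht.le).deriv, ← div_eq_mul_inv, div_lt_div_iff₀ two_pos hs, div_lt_iff₀ hs]
    exact ⟨by linarith [mul_sqrt_lt_of_ode hf0 hf ht], lt_mul_sqrt_of_ode hf0 hf ht⟩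
  refine ⟨hpos, fun t ht ↦ ?_⟩
  obtain ⟨hlow, hup⟩ := hpos (-t) (neg_pos.mpr ht)
  rw [Function.Odd.deriv_even hodd, hodd] at hlow hup
  constructor <;> linarith
end

section
/- There exists a > 0 such that f(t)/√t tends to a as t tends to +∞. -/
/-!
Separation of variables: if `G y = ∫₀^y √(1 + 2 s²) ds`, the equation says exactly that
`G (f t) = t` for `t ≥ 0`. Since `G` is increasing and unbounded, `f t → ∞`, and since
`G y = (√2 / 2) y² + O(y)`, we get `f t / √t = f t / √(G (f t)) → 2 ^ (1/4)`.
-/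

open Real Filter Topology Set

/-- `∫₀^y √(1 + 2 s²) ds` in closed form. -/
noncomputable def sqrtIntegral (y : ℝ) : ℝ :=
  y * √(1 + 2 * y ^ 2) / 2 + arsinh (√2 * y) / (2 * √2)

theorem hasDerivAt_sqrtIntegral (y : ℝ) :
    HasDerivAt sqrtIntegral (√(1 + 2 * y ^ 2)) y := by
  have hpos : 0 < 1 + 2 * y ^ 2 := by positivity
  have hinner : HasDerivAt (fun y : ℝ => 1 + 2 * y ^ 2) (4 * y) y :=
    (((hasDerivAt_pow 2 y).const_mul 2).const_add 1).congr_deriv (by norm_num; ring)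
  have harsinh : HasDerivAt (fun y => arsinh (√2 * y)) ((√(1 + 2 * y ^ 2))⁻¹ * √2) y :=
    ((hasDerivAt_id' y).const_mul √2).arsinh.congr_deriv (by
      rw [mul_pow, sq_sqrt zero_le_two, smul_eq_mul, mul_one])
  have h : HasDerivAt sqrtIntegral
      ((1 * √(1 + 2 * y ^ 2) + y * (4 * y / (2 * √(1 + 2 * y ^ 2)))) / 2 +
        (√(1 + 2 * y ^ 2))⁻¹ * √2 / (2 * √2)) y :=
    (((hasDerivAt_id y).mul (hinner.sqrt hpos.ne')).div_const 2).add (harsinh.div_const _)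
  refine h.congr_deriv ?_
  have hs : √(1 + 2 * y ^ 2) ^ 2 = 1 + 2 * y ^ 2 := sq_sqrt hpos.le
  field_simp
  linear_combination (-2) * hs

theorem strictMono_sqrtIntegral : StrictMono sqrtIntegral :=
  strictMono_of_hasDerivAt_pos hasDerivAt_sqrtIntegral fun y => sqrt_pos.2 (by positivity)

@[simp] theorem sqrtIntegral_zero : sqrtIntegral 0 = 0 := by simp [sqrtIntegral]

theorem arsinh_le_self {x : ℝ} (hx : 0 ≤ x) : arsinh x ≤ x := by
  rw [← sinh_le_sinh, sinh_arsinh]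
  exact self_le_sinh_iff.2 hx

theorem sqrtIntegral_mem_Icc {y : ℝ} (hy : 0 ≤ y) :
    sqrtIntegral y ∈ Icc (√2 / 2 * y ^ 2) (√2 / 2 * y ^ 2 + y) := by
  have h2 : (0 : ℝ) < √2 := by positivity
  have hlo : √2 * y ≤ √(1 + 2 * y ^ 2) :=
    le_sqrt_of_sq_le (by rw [mul_pow, sq_sqrt zero_le_two]; linarith)
  have hhi : √(1 + 2 * y ^ 2) ≤ 1 + √2 * y :=
    sqrt_le_iff.2 ⟨by positivity, by nlinarith [sq_sqrt (zero_le_two : (0:ℝ) ≤ 2)]⟩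
  have ha0 : 0 ≤ arsinh (√2 * y) := arsinh_nonneg_iff.2 (by positivity)
  have ha1 : arsinh (√2 * y) ≤ √2 * y := arsinh_le_self (by positivity)
  unfold sqrtIntegral
  constructor
  · nlinarith [mul_le_mul_of_nonneg_left hlo hy, div_nonneg ha0 (by positivity : (0:ℝ) ≤ 2 * √2)]
  · have : arsinh (√2 * y) / (2 * √2) ≤ y / 2 := by
      rw [div_le_iff₀ (by positivity)]; nlinarith
    nlinarith [mul_le_mul_of_nonneg_left hhi hy]

theorem tendsto_sqrtIntegral_div_sq :
    Tendsto (fun y => sqrtIntegral y / y ^ 2) atTop (𝓝 (√2 / 2)) := by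
  have hupper : Tendsto (fun y : ℝ => √2 / 2 + y⁻¹) atTop (𝓝 (√2 / 2)) := by
    simpa using tendsto_inv_atTop_zero.const_add (√2 / 2)
  refine tendsto_of_tendsto_of_tendsto_of_le_of_le' tendsto_const_nhds hupper ?_ ?_
  all_goals
    filter_upwards [eventually_gt_atTop 0] with y hy
    have hG := sqrtIntegral_mem_Icc hy.le
  · rw [le_div_iff₀ (by positivity)]
    exact hG.1
  · rw [div_le_iff₀ (by positivity), add_mul, show y⁻¹ * y ^ 2 = y by field_simp]
    exact hG.2

theorem tendsto_div_sqrt_sqrtIntegral :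
    Tendsto (fun y => y / √(sqrtIntegral y)) atTop (𝓝 (√(√2))) := by
  have hinv : (√2 / 2)⁻¹ = √2 := by
    rw [inv_div, div_eq_iff (by positivity), mul_self_sqrt zero_le_two]
  have h := (continuous_sqrt.tendsto _).comp (tendsto_sqrtIntegral_div_sq.inv₀ (by positivity))
  rw [hinv] at h
  refine h.congr' ?_
  filter_upwards [eventually_gt_atTop 0] with y hy
  rw [Function.comp_apply, inv_div, sqrt_div (sq_nonneg y), sqrt_sq hy.le]

theorem comp_eq_add_of_hasDerivAt_mul_eq_one {f f' G G' : ℝ → ℝ}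
    (hG : ∀ y, HasDerivAt G (G' y) y) (hf : ∀ t, 0 ≤ t → HasDerivAt f (f' t) t)
    (h : ∀ t, 0 ≤ t → G' (f t) * f' t = 1) {t : ℝ} (ht : 0 ≤ t) :
    G (f t) = G (f 0) + t := by
  have hderiv : ∀ s, 0 ≤ s → HasDerivAt (fun s => G (f s) - s) 0 s := fun s hs =>
    (((hG (f s)).comp s (hf s hs)).sub (hasDerivAt_id s)).congr_deriv (by rw [h s hs, sub_self])
  have := constant_of_has_deriv_right_zero (f := fun s => G (f s) - s) (a := 0) (b := t)
    (fun s hs => (hderiv s hs.1).continuousAt.continuousWithinAt)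
    (fun s hs => (hderiv s hs.1).hasDerivWithinAt) t ⟨ht, le_rfl⟩
  simp only [sub_zero] at this
  linarith

theorem rpow_neg_one_half_eq_inv_sqrt {x : ℝ} (hx : 0 ≤ x) : x ^ (-(1/2) : ℝ) = (√x)⁻¹ := by
  rw [rpow_neg hx, sqrt_eq_rpow]

theorem stmt_5_general (f : ℝ → ℝ) (hf0 : f 0 = 0)
    (hf1 : ∀ t : ℝ, 0 ≤ t → HasDerivAt f ((1 + 2 * f t ^ 2) ^ (-(1/2) : ℝ)) t) :
    ∃ a : ℝ, 0 < a ∧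
      Filter.Tendsto (fun t : ℝ => f t / Real.sqrt t) Filter.atTop (nhds a) := by
  have hGf : ∀ t, 0 ≤ t → sqrtIntegral (f t) = t := fun t ht => by
    have := comp_eq_add_of_hasDerivAt_mul_eq_one hasDerivAt_sqrtIntegral hf1 (fun s _ => by
      rw [rpow_neg_one_half_eq_inv_sqrt (by positivity)]
      exact mul_inv_cancel₀ (sqrt_pos.2 (by positivity)).ne') ht
    rwa [hf0, sqrtIntegral_zero, zero_add] at this
  have hf_top : Tendsto f atTop atTop := by
    refine tendsto_atTop.2 fun b => ?_
    filter_upwards [eventually_ge_atTop (max 0 (sqrtIntegral b))] with t ht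
    rw [← strictMono_sqrtIntegral.le_iff_le, hGf t (le_of_max_le_left ht)]
    exact le_of_max_le_right ht
  refine ⟨√(√2), by positivity, (tendsto_div_sqrt_sqrtIntegral.comp hf_top).congr' ?_⟩
  filter_upwards [eventually_ge_atTop 0] with t ht
  rw [Function.comp_apply, hGf t ht]

theorem stmt_5 (f : ℝ → ℝ) (hf0 : f 0 = 0) (hodd : ∀ t : ℝ, f (-t) = -f t)
    (hf1 : ∀ t : ℝ, 0 ≤ t → HasDerivAt f ((1 + 2 * f t ^ 2) ^ (-(1/2) : ℝ)) t) :
    ∃ a : ℝ, 0 < a ∧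
      Filter.Tendsto (fun t : ℝ => f t / Real.sqrt t) Filter.atTop (nhds a) :=
  stmt_5_general f hf0 hf1
end

section
/- There exists a constant C > 0 such that |f(t)| ≥ C|t| for |t| ≤ 1 and |f(t)| ≥ C|t|^(1/2) for |t| ≥ 1. -/
open Real Set

lemma key_ineq {y : ℝ} (hy : 0 ≤ y) :
    Real.sqrt (1 + 2 * y ^ 2) ≤ 1 + Real.sqrt 2 * y := by
  have h2 : (Real.sqrt 2) ^ 2 = 2 := Real.sq_sqrt (by norm_num)
  have h : 1 + 2 * y ^ 2 ≤ (1 + Real.sqrt 2 * y) ^ 2 := by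
    nlinarith [Real.sqrt_nonneg 2]
  calc Real.sqrt (1 + 2 * y ^ 2) ≤ Real.sqrt ((1 + Real.sqrt 2 * y) ^ 2) :=
        Real.sqrt_le_sqrt h
    _ = 1 + Real.sqrt 2 * y := Real.sqrt_sq (by positivity)

lemma d_eq {y : ℝ} : (1 + 2 * y ^ 2 : ℝ) ^ (-(1/2) : ℝ) = (Real.sqrt (1 + 2 * y ^ 2))⁻¹ := by
  rw [Real.rpow_neg (by positivity), ← Real.sqrt_eq_rpow]

theorem stmt_6 (f : ℝ → ℝ) (hf0 : f 0 = 0) (hodd : ∀ t : ℝ, f (-t) = -f t)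
    (hf1 : ∀ t : ℝ, 0 ≤ t → HasDerivAt f ((1 + 2 * f t ^ 2) ^ (-(1/2) : ℝ)) t) :
    ∃ C : ℝ, 0 < C ∧
      (∀ t : ℝ, |t| ≤ 1 → C * |t| ≤ |f t|) ∧
      (∀ t : ℝ, 1 ≤ |t| → C * |t| ^ ((1:ℝ)/2) ≤ |f t|) := by
  set c : ℝ := Real.sqrt 2 / 2 with hc
  have hc01 : 0 < c ∧ c ≤ 1 := by
    constructor
    · positivity
    · rw [hc, div_le_one (by norm_num)]
      calc Real.sqrt 2 ≤ Real.sqrt 4 := Real.sqrt_le_sqrt (by norm_num)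
        _ = 2 := by rw [show (4:ℝ) = 2^2 by norm_num, Real.sqrt_sq (by norm_num)]
  -- positivity and boundedness of the derivative
  have hs_pos : ∀ y : ℝ, (0:ℝ) < Real.sqrt (1 + 2 * y ^ 2) := fun y => by positivity
  have hd_pos : ∀ y : ℝ, (0:ℝ) < (1 + 2 * y ^ 2 : ℝ) ^ (-(1/2) : ℝ) := by
    intro y; rw [d_eq]; exact inv_pos.mpr (hs_pos y)
  have hd_le1 : ∀ y : ℝ, (1 + 2 * y ^ 2 : ℝ) ^ (-(1/2) : ℝ) ≤ 1 := by
    intro y; rw [d_eq]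
    refine inv_le_one_of_one_le₀ ?_
    nlinarith [Real.sq_sqrt (show (0:ℝ) ≤ 1 + 2 * y ^ 2 by positivity),
      Real.sqrt_nonneg (1 + 2 * y ^ 2)]
  have hcont : ContinuousOn f (Ici (0:ℝ)) := fun t ht =>
    (hf1 t ht).continuousAt.continuousWithinAt
  have hint : interior (Ici (0:ℝ)) = Ioi 0 := interior_Ici
  -- f is monotone on Ici 0, hence nonneg
  have hmono : MonotoneOn f (Ici (0:ℝ)) := by
    refine monotoneOn_of_hasDerivWithinAt_nonneg (convex_Ici 0) hcont
      (f' := fun t => (1 + 2 * f t ^ 2 : ℝ) ^ (-(1/2) : ℝ)) ?_ ?_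
    · intro x hx
      exact (hf1 x (le_of_lt (by rwa [hint, Set.mem_Ioi] at hx))).hasDerivWithinAt
    · intro x hx; exact (hd_pos _).le
  have hfnn : ∀ t : ℝ, 0 ≤ t → 0 ≤ f t := by
    intro t ht
    have := hmono (self_mem_Ici) ht ht
    rwa [hf0] at this
  -- f t ≤ t
  have hflet : ∀ t : ℝ, 0 ≤ t → f t ≤ t := by
    intro t ht
    have hg : MonotoneOn (fun t => t - f t) (Ici (0:ℝ)) := by
      refine monotoneOn_of_hasDerivWithinAt_nonneg (convex_Ici 0) (by fun_prop)
        (f' := fun t => 1 - (1 + 2 * f t ^ 2 : ℝ) ^ (-(1/2) : ℝ)) ?_ ?_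
      · intro x hx
        exact ((hasDerivAt_id x).sub (hf1 x (le_of_lt (by rwa [hint, Set.mem_Ioi] at hx)))).hasDerivWithinAt
      · intro x hx; linarith [hd_le1 (f x)]
    have := hg self_mem_Ici ht ht
    simp only [hf0, sub_zero] at this
    linarith
  -- the key lower bound: t ≤ f t + c * (f t)^2
  have hkey : ∀ t : ℝ, 0 ≤ t → t ≤ f t + c * f t ^ 2 := by
    intro t ht
    have hh : MonotoneOn (fun t => f t + c * f t ^ 2 - t) (Ici (0:ℝ)) := by
      refine monotoneOn_of_hasDerivWithinAt_nonneg (convex_Ici 0) (by fun_prop)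
        (f' := fun t => (1 + 2 * f t ^ 2 : ℝ) ^ (-(1/2) : ℝ)
          + c * (2 * f t * ((1 + 2 * f t ^ 2 : ℝ) ^ (-(1/2) : ℝ))) - 1) ?_ ?_
      · intro x hx
        have hd := hf1 x (le_of_lt (by rwa [hint, Set.mem_Ioi] at hx))
        exact ((hd.add ((hd.pow 2).const_mul c)).sub (hasDerivAt_id x)).hasDerivWithinAt
          |>.congr_deriv (by ring)
      · intro x hx
        have hfx : 0 ≤ f x := hfnn x (le_of_lt (by rwa [hint, Set.mem_Ioi] at hx))
        set s := Real.sqrt (1 + 2 * f x ^ 2) with hsdef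
        have hs : 0 < s := hs_pos _
        have hle : s ≤ 1 + Real.sqrt 2 * f x := key_ineq hfx
        have hde : (1 + 2 * f x ^ 2 : ℝ) ^ (-(1/2) : ℝ) = s⁻¹ := d_eq
        rw [hde]
        have h1 : (1:ℝ) = s⁻¹ * s := by field_simp
        have h2 : s⁻¹ * s ≤ s⁻¹ * (1 + Real.sqrt 2 * f x) :=
          mul_le_mul_of_nonneg_left hle (inv_nonneg.mpr hs.le)
        have hcc : c * 2 = Real.sqrt 2 := by rw [hc]; ring
        nlinarith [inv_nonneg.mpr hs.le]
    have := hh self_mem_Ici ht ht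
    simp only [hf0] at this
    nlinarith
  -- f 1 ≥ 1/2
  have hf1half : 1/2 ≤ f 1 := by
    have h1 := hkey 1 zero_le_one
    have h2 := hflet 1 zero_le_one
    have h3 := hfnn 1 zero_le_one
    nlinarith [hc01.1, hc01.2]
  -- main bounds for nonneg t
  have hsmall : ∀ t : ℝ, 0 ≤ t → t ≤ 1 → (1/3 : ℝ) * t ≤ f t := by
    intro t ht ht1
    have h1 := hkey t ht
    have h2 := hflet t ht
    have h3 := hfnn t ht
    nlinarith [hc01.1, hc01.2]
  have hbig : ∀ t : ℝ, 1 ≤ t → (1/3 : ℝ) * Real.sqrt t ≤ f t := by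
    intro t ht
    have h1 := hkey t (by linarith)
    have h3 := hfnn t (by linarith)
    have h4 : 1/2 ≤ f t := le_trans hf1half (hmono (by norm_num) (by simp; linarith) ht)
    have h5 : t ≤ 3 * f t ^ 2 := by nlinarith [hc01.2]
    have : Real.sqrt t ≤ Real.sqrt (9 * f t ^ 2) := Real.sqrt_le_sqrt (by nlinarith)
    rw [show (9 : ℝ) * f t ^ 2 = (3 * f t)^2 by ring, Real.sqrt_sq (by linarith)] at this
    linarith
  refine ⟨1/3, by norm_num, ?_, ?_⟩
  · intro t ht
    rcases le_or_gt 0 t with h | h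
    · rw [abs_of_nonneg h, abs_of_nonneg (hfnn t h)]
      exact hsmall t h (by rwa [abs_of_nonneg h] at ht)
    · have hmt : 0 ≤ -t := by linarith
      have : f t = - f (-t) := by rw [← hodd]; simp
      rw [abs_of_nonpos h.le, this, abs_neg, abs_of_nonneg (hfnn _ hmt)]
      exact hsmall (-t) hmt (by rwa [abs_of_nonpos h.le] at ht)
  · intro t ht
    rw [show |t| ^ ((1:ℝ)/2) = Real.sqrt |t| by rw [Real.sqrt_eq_rpow]]
    rcases le_or_gt 0 t with h | h
    · rw [abs_of_nonneg h] at ht ⊢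
      rw [abs_of_nonneg (hfnn t (by linarith))]
      exact hbig t ht
    · have hmt : (1:ℝ) ≤ -t := by rwa [abs_of_nonpos h.le] at ht
      have : f t = - f (-t) := by rw [← hodd]; simp
      rw [abs_of_nonpos h.le, this, abs_neg, abs_of_nonneg (hfnn _ (by linarith))]
      exact hbig (-t) hmt
end

section
/- The function t ↦ f(t)·f'(t)/t is strictly decreasing on (0, ∞). -/
/-!
Put `u = 1 + 2 f²`, so that `f' = u^(-1/2)` and `f f' = F ∘ f` with `F x = x (1 + 2x²)^(-1/2)`.
Since `F' x = (1 + 2x²)^(-3/2)`, the chain rule gives `(f f')' = u^(-3/2) u^(-1/2) = u^(-2)`.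
As `f` increases from `f 0 = 0`, `u` increases on `[0, ∞)`, so `f f'` is strictly concave there
and vanishes at `0`; hence its secant slope `f t f' t / t` from the origin strictly decreases.
-/

open Set

lemma StrictConcaveOn.strictAntiOn_div_of_map_zero {g : ℝ → ℝ}
    (hg : StrictConcaveOn ℝ (Ici 0) g) (h0 : g 0 = 0) :
    StrictAntiOn (fun t => g t / t) (Ioi 0) := by
  intro a ha b hb hab
  simpa [h0] using hg.secant_strict_mono self_mem_Ici (mem_Ici.2 (le_of_lt ha))
    (mem_Ici.2 (le_of_lt hb)) (ne_of_gt ha) (ne_of_gt hb) hab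

lemma hasDerivAt_mul_one_add_two_mul_sq_rpow_neg_half (x : ℝ) :
    HasDerivAt (fun y : ℝ => y * (1 + 2 * y ^ 2) ^ (-(1/2) : ℝ))
      ((1 + 2 * x ^ 2) ^ (-(3/2) : ℝ)) x := by
  have hu : (1 + 2 * x ^ 2 : ℝ) ≠ 0 := by positivity
  have hinner : HasDerivAt (fun y : ℝ => 1 + 2 * y ^ 2) (4 * x) x := by
    refine (((hasDerivAt_pow 2 x).const_mul (2 : ℝ)).const_add 1).congr_deriv ?_
    push_cast
    ring
  refine ((hasDerivAt_id x).mul (hinner.rpow_const (Or.inl hu))).congr_deriv ?_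
  rw [show (-(1/2) : ℝ) = -(3/2) + 1 by norm_num, Real.rpow_add_one hu,
    show (-(3/2) : ℝ) + 1 - 1 = -(3/2) by norm_num]
  simp only [id]
  ring

section

variable {f : ℝ → ℝ}
  (hf : ∀ t : ℝ, 0 ≤ t → HasDerivAt f ((1 + 2 * f t ^ 2) ^ (-(1/2) : ℝ)) t)
include hf

lemma strictMonoOn_Ici_of_hasDerivAt_rpow : StrictMonoOn f (Ici 0) := by
  refine strictMonoOn_of_deriv_pos (convex_Ici 0)
    (fun t ht => (hf t ht).continuousAt.continuousWithinAt) fun t ht => ?_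
  rw [interior_Ici] at ht
  rw [(hf t (le_of_lt ht)).deriv]
  positivity

lemma hasDerivAt_mul_rpow_of_hasDerivAt_rpow {t : ℝ} (ht : 0 ≤ t) :
    HasDerivAt (fun s => f s * (1 + 2 * f s ^ 2) ^ (-(1/2) : ℝ))
      ((1 + 2 * f t ^ 2) ^ (-2 : ℝ)) t := by
  refine ((hasDerivAt_mul_one_add_two_mul_sq_rpow_neg_half (f t)).comp t (hf t ht)).congr_deriv ?_
  rw [← Real.rpow_add (by positivity)]
  norm_num

lemma strictConcaveOn_mul_rpow_of_hasDerivAt_rpow (hf0 : f 0 = 0) :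
    StrictConcaveOn ℝ (Ici 0) (fun s => f s * (1 + 2 * f s ^ 2) ^ (-(1/2) : ℝ)) := by
  have hmono := strictMonoOn_Ici_of_hasDerivAt_rpow hf
  refine StrictAntiOn.strictConcaveOn_of_deriv (convex_Ici 0)
    (fun t ht => (hasDerivAt_mul_rpow_of_hasDerivAt_rpow hf ht).continuousAt.continuousWithinAt) ?_
  rw [interior_Ici]
  intro a ha b hb hab
  have ha' : (0 : ℝ) ≤ a := le_of_lt ha
  have hb' : (0 : ℝ) ≤ b := le_of_lt hb
  have hfa : 0 ≤ f a := hf0 ▸ hmono.monotoneOn self_mem_Ici ha' ha'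
  have hfab : f a < f b := hmono ha' hb' hab
  simp only [(hasDerivAt_mul_rpow_of_hasDerivAt_rpow hf ha').deriv,
    (hasDerivAt_mul_rpow_of_hasDerivAt_rpow hf hb').deriv]
  exact Real.rpow_lt_rpow_of_neg (by positivity) (by nlinarith) (by norm_num)

end

theorem stmt_9_general (f : ℝ → ℝ) (hf0 : f 0 = 0)
    (hf1 : ∀ t : ℝ, 0 ≤ t → HasDerivAt f ((1 + 2 * f t ^ 2) ^ (-(1/2) : ℝ)) t) :
    StrictAntiOn (fun t : ℝ => f t * deriv f t / t) (Set.Ioi 0) := by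
  refine ((strictConcaveOn_mul_rpow_of_hasDerivAt_rpow hf1 hf0).strictAntiOn_div_of_map_zero
    (by simp [hf0])).congr fun t ht => ?_
  simp only [(hf1 t (le_of_lt ht)).deriv]

theorem stmt_9 (f : ℝ → ℝ) (hf0 : f 0 = 0) (hodd : ∀ t : ℝ, f (-t) = -f t)
    (hf1 : ∀ t : ℝ, 0 ≤ t → HasDerivAt f ((1 + 2 * f t ^ 2) ^ (-(1/2) : ℝ)) t) :
    StrictAntiOn (fun t : ℝ => f t * deriv f t / t) (Set.Ioi 0) :=
  stmt_9_general f hf0 hf1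
end

section
/- For any p > 4, the function t ↦ f(t)^(p-1) · f'(t)/t is strictly increasing on (0, ∞). -/
/-!
Write `s(u) = √(1 + 2u²)`, so that `f' = 1 / s(f)` on `[0, ∞)`. The function
`H(u) = u s(u)³ / (3 + 4u²)` (`invLowerBound`, a lower bound for `f⁻¹(u) = ∫₀ᵘ s`) has
`H(0) = 0` and `H'(u) = s(u) (3 + 20u² + 16u⁴) / (3 + 4u²)² ≤ s(u)`, hence `(H ∘ f)' ≤ 1` and `H(f t) ≤ t`, i.e. `u s³ ≤ t (3 + 4u²)` for `u = f t`.
Up to a positive factor, the derivative of `f^(p-1) f' / t = u^(p-1) / (s t)` is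
`t ((p - 1) s² - 2u²) - u s³`, which by that bound is at least `(p - 4) t s² > 0`.
-/

open Real Set

noncomputable def invLowerBound (u : ℝ) : ℝ := u * √(1 + 2 * u ^ 2) ^ 3 / (3 + 4 * u ^ 2)

lemma hasDerivAt_sqrt_one_add_two_mul_sq (u : ℝ) :
    HasDerivAt (fun u => √(1 + 2 * u ^ 2)) (2 * u / √(1 + 2 * u ^ 2)) u := by
  have h := (((hasDerivAt_pow 2 u).const_mul 2).const_add 1).sqrt (by positivity)
  convert h using 1
  field_simp
  ring

lemma hasDerivAt_invLowerBound (u : ℝ) :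
    HasDerivAt invLowerBound
      (√(1 + 2 * u ^ 2) * ((3 + 20 * u ^ 2 + 16 * u ^ 4) / (3 + 4 * u ^ 2) ^ 2)) u := by
  have hs2 : √(1 + 2 * u ^ 2) ^ 2 = 1 + 2 * u ^ 2 := sq_sqrt (by positivity)
  have hs : √(1 + 2 * u ^ 2) ≠ 0 := by positivity
  refine (((hasDerivAt_id' u).fun_mul ((hasDerivAt_sqrt_one_add_two_mul_sq u).fun_pow 3)).fun_div
    (((hasDerivAt_pow 2 u).const_mul 4).const_add 3) (by positivity)).congr_deriv ?_
  field_simp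
  linear_combination (3 - 4 * u ^ 2) * √(1 + 2 * u ^ 2) ^ 2 * hs2

lemma invLowerBound_zero : invLowerBound 0 = 0 := by
  simp [invLowerBound]

lemma sub_pos_of_invLowerBound_le {p t u : ℝ} (hp : 4 < p) (ht : 0 < t) (hu : invLowerBound u ≤ t) :
    0 < t * ((p - 1) * (1 + 2 * u ^ 2) - 2 * u ^ 2) - u * √(1 + 2 * u ^ 2) ^ 3 := by
  have hu' : u * √(1 + 2 * u ^ 2) ^ 3 ≤ t * (3 + 4 * u ^ 2) :=
    (div_le_iff₀ (by positivity)).1 hu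
  nlinarith [mul_pos (mul_pos ht (sub_pos.2 hp)) (by positivity : (0 : ℝ) < 1 + 2 * u ^ 2)]

variable {f : ℝ → ℝ}

lemma strictMonoOn_Ici_of_hasDerivAt_inv_sqrt
    (hf : ∀ t, 0 ≤ t → HasDerivAt f (√(1 + 2 * f t ^ 2))⁻¹ t) : StrictMonoOn f (Ici 0) :=
  strictMonoOn_of_hasDerivWithinAt_pos (convex_Ici 0)
    (fun t ht => (hf t ht).continuousAt.continuousWithinAt)
    (fun t ht => (hf t (interior_subset ht)).hasDerivWithinAt) (fun _ _ => by positivity)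

lemma invLowerBound_comp_le (hf : ∀ t, 0 ≤ t → HasDerivAt f (√(1 + 2 * f t ^ 2))⁻¹ t)
    (hf0 : f 0 = 0) {t : ℝ} (ht : 0 ≤ t) : invLowerBound (f t) ≤ t := by
  have hderiv : ∀ x, 0 ≤ x → HasDerivAt (fun y => invLowerBound (f y))
      ((3 + 20 * f x ^ 2 + 16 * f x ^ 4) / (3 + 4 * f x ^ 2) ^ 2) x := fun x hx => by
    refine ((hasDerivAt_invLowerBound (f x)).comp x (hf x hx)).congr_deriv ?_
    have : √(1 + 2 * f x ^ 2) ≠ 0 := by positivity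
    field_simp
  have hle := (convex_Ici (0 : ℝ)).image_sub_le_mul_sub_of_deriv_le
    (fun x hx => (hderiv x hx).continuousAt.continuousWithinAt)
    (fun x hx => (hderiv x (interior_subset hx)).differentiableAt.differentiableWithinAt)
    (C := 1) (fun x hx => by
      rw [(hderiv x (interior_subset hx)).deriv, div_le_one (by positivity)]
      nlinarith [sq_nonneg (f x)])
    0 self_mem_Ici t ht ht
  simpa [hf0, invLowerBound_zero] using hle

lemma hasDerivAt_rpow_mul_deriv_div (hf : ∀ t, 0 ≤ t → HasDerivAt f (√(1 + 2 * f t ^ 2))⁻¹ t)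
    (p : ℝ) {t : ℝ} (ht : 0 < t) (hft : 0 < f t) :
    HasDerivAt (fun x => f x ^ (p - 1) * deriv f x / x)
      (f t ^ (p - 2) * (t * ((p - 1) * (1 + 2 * f t ^ 2) - 2 * f t ^ 2) - f t * √(1 + 2 * f t ^ 2) ^ 3)
        / (t ^ 2 * (1 + 2 * f t ^ 2) ^ 2)) t := by
  have hderiv : deriv f =ᶠ[nhds t] fun x => (√(1 + 2 * f x ^ 2))⁻¹ := by
    filter_upwards [Ioi_mem_nhds ht] with x hx using (hf x (le_of_lt hx)).deriv
  have hs : √(1 + 2 * f t ^ 2) ≠ 0 := by positivity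
  have hs2 : √(1 + 2 * f t ^ 2) ^ 2 = 1 + 2 * f t ^ 2 := sq_sqrt (by positivity)
  have hpow : f t ^ (p - 1) = f t ^ (p - 2) * f t := by
    rw [← rpow_add_one hft.ne']; ring_nf
  have hg := (((hasDerivAt_rpow_const (p := p - 1) (Or.inl hft.ne')).comp t (hf t ht.le)).fun_mul
    (((hasDerivAt_sqrt_one_add_two_mul_sq (f t)).comp t (hf t ht.le)).fun_inv hs)).fun_div
    (hasDerivAt_id' t) ht.ne'
  refine (hg.congr_of_eventuallyEq ?_).congr_deriv ?_
  · filter_upwards [hderiv] with x hx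
    simp [hx]
  · simp only [Function.comp_apply]
    rw [hpow, show p - 1 - 1 = p - 2 by ring]
    field_simp
    generalize √(1 + 2 * f t ^ 2) = s at hs2 ⊢
    rw [← hs2]
    ring

theorem stmt_11_general (f : ℝ → ℝ) (hf0 : f 0 = 0)
    (hf1 : ∀ t : ℝ, 0 ≤ t → HasDerivAt f ((1 + 2 * f t ^ 2) ^ (-(1/2) : ℝ)) t) (p : ℝ) (hp : 4 < p) :
    StrictMonoOn (fun t : ℝ => f t ^ (p - 1) * deriv f t / t) (Set.Ioi 0) := by
  have hf : ∀ t, 0 ≤ t → HasDerivAt f (√(1 + 2 * f t ^ 2))⁻¹ t := fun t ht => by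
    simpa only [rpow_neg (by positivity : (0 : ℝ) ≤ 1 + 2 * f t ^ 2), ← sqrt_eq_rpow] using hf1 t ht
  have hpos : ∀ t, 0 < t → 0 < f t := fun t ht => by
    simpa [hf0] using strictMonoOn_Ici_of_hasDerivAt_inv_sqrt hf self_mem_Ici ht.le ht
  have hderiv : ∀ t ∈ Ioi (0 : ℝ), HasDerivAt (fun x => f x ^ (p - 1) * deriv f x / x) _ t :=
    fun t ht => hasDerivAt_rpow_mul_deriv_div hf p ht (hpos t ht)
  refine strictMonoOn_of_hasDerivWithinAt_pos (convex_Ioi 0)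
    (fun t ht => (hderiv t ht).continuousAt.continuousWithinAt)
    (fun t ht => (hderiv t (interior_subset ht)).hasDerivWithinAt) fun t ht => ?_
  rw [interior_Ioi, mem_Ioi] at ht
  exact div_pos (mul_pos (rpow_pos_of_pos (hpos t ht) _)
    (sub_pos_of_invLowerBound_le hp ht (invLowerBound_comp_le hf hf0 ht.le))) (by positivity)

theorem stmt_11 (f : ℝ → ℝ) (hf0 : f 0 = 0) (hodd : ∀ t : ℝ, f (-t) = -f t)
    (hf1 : ∀ t : ℝ, 0 ≤ t → HasDerivAt f ((1 + 2 * f t ^ 2) ^ (-(1/2) : ℝ)) t) (p : ℝ) (hp : 4 < p) :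
    StrictMonoOn (fun t : ℝ => f t ^ (p - 1) * deriv f t / t) (Set.Ioi 0) :=
  stmt_11_general f hf0 hf1 p hp
end

section
/- The function t ↦ f(t)·f'(t) is nondecreasing on ℝ. In particular, for all λ ∈ [0,1] and t ≥ 0, f(λt)·f'(λt)·λt ≤ λ·f(t)·f'(t)·t, and for all λ ≥ 1 and t ≥ 0 the reverse inequality holds. -/
theorem stmt_12 (f : ℝ → ℝ) (hf0 : f 0 = 0) (hodd : ∀ t : ℝ, f (-t) = -f t)
    (hf1 : ∀ t : ℝ, 0 ≤ t → HasDerivAt f ((1 + 2 * f t ^ 2) ^ (-(1/2) : ℝ)) t) :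
    Monotone (fun t : ℝ => f t * deriv f t) ∧
    (∀ l t : ℝ, 0 ≤ l → l ≤ 1 → 0 ≤ t →
      f (l * t) * deriv f (l * t) * (l * t) ≤ l * (f t * deriv f t * t)) ∧
    (∀ l t : ℝ, 1 ≤ l → 0 ≤ t →
      l * (f t * deriv f t * t) ≤ f (l * t) * deriv f (l * t) * (l * t)) := by
  have hD : ∀ t : ℝ, HasDerivAt f ((1 + 2 * f t ^ 2) ^ (-(1/2) : ℝ)) t := by
    intro t
    rcases le_or_gt 0 t with ht | ht
    · exact hf1 t ht
    · have h := hf1 (-t) (by linarith)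
      have h2 : HasDerivAt (fun x : ℝ => -f (-x))
          (-((1 + 2 * f (-t) ^ 2) ^ (-(1/2) : ℝ) * (-1))) t :=
        (h.comp t (hasDerivAt_neg t)).neg
      have hfe : (fun x : ℝ => -f (-x)) = f := by
        funext x; rw [hodd]; ring
      rw [hfe] at h2
      have hsq : f (-t) ^ 2 = f t ^ 2 := by rw [hodd]; ring
      rw [hsq] at h2
      simpa using h2
  have hderiv : ∀ t : ℝ, deriv f t = (1 + 2 * f t ^ 2) ^ (-(1/2) : ℝ) :=
    fun t => (hD t).deriv
  have hfmono : Monotone f := by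
    apply monotone_of_deriv_nonneg (fun t => (hD t).differentiableAt)
    intro t
    rw [hderiv t]
    have : (0:ℝ) < 1 + 2 * f t ^ 2 := by positivity
    positivity
  have key : ∀ x y : ℝ, x ≤ y →
      x * (1 + 2 * x ^ 2) ^ (-(1/2) : ℝ) ≤ y * (1 + 2 * y ^ 2) ^ (-(1/2) : ℝ) := by
    intro x y hxy
    have hx0 : (0:ℝ) < 1 + 2 * x ^ 2 := by positivity
    have hy0 : (0:ℝ) < 1 + 2 * y ^ 2 := by positivity
    rw [Real.rpow_neg hx0.le, Real.rpow_neg hy0.le,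
        ← Real.sqrt_eq_rpow, ← Real.sqrt_eq_rpow,
        ← div_eq_mul_inv, ← div_eq_mul_inv]
    have hap : 0 < Real.sqrt (1 + 2 * x ^ 2) := Real.sqrt_pos.mpr hx0
    have hbp : 0 < Real.sqrt (1 + 2 * y ^ 2) := Real.sqrt_pos.mpr hy0
    rw [div_le_div_iff₀ hap hbp]
    have ha2 : Real.sqrt (1 + 2 * x ^ 2) ^ 2 = 1 + 2 * x ^ 2 := Real.sq_sqrt hx0.le
    have hb2 : Real.sqrt (1 + 2 * y ^ 2) ^ 2 = 1 + 2 * y ^ 2 := Real.sq_sqrt hy0.le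
    set a := Real.sqrt (1 + 2 * x ^ 2)
    set b := Real.sqrt (1 + 2 * y ^ 2)
    rcases le_or_gt 0 x with hx | hx
    · nlinarith [mul_nonneg hx hbp.le, mul_nonneg (hx.trans hxy) hap.le,
        sq_nonneg (x * b - y * a), sq_nonneg (x * b + y * a)]
    · rcases le_or_gt 0 y with hy | hy
      · have h1 : x * b ≤ 0 := mul_nonpos_of_nonpos_of_nonneg hx.le hbp.le
        have h2 : 0 ≤ y * a := mul_nonneg hy hap.le
        linarith
      · nlinarith [mul_nonneg (by linarith : (0:ℝ) ≤ -y) hap.le,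
          mul_nonneg (by linarith : (0:ℝ) ≤ -x) hbp.le,
          sq_nonneg (x * b - y * a), sq_nonneg (x * b + y * a)]
  have gmono : Monotone (fun t : ℝ => f t * deriv f t) := by
    intro s t hst
    simp only
    rw [hderiv s, hderiv t]
    exact key (f s) (f t) (hfmono hst)
  refine ⟨gmono, ?_, ?_⟩
  · intro l t hl0 hl1 ht
    have h1 : l * t ≤ t := by nlinarith
    have h2 : f (l * t) * deriv f (l * t) ≤ f t * deriv f t := gmono h1
    calc f (l * t) * deriv f (l * t) * (l * t)
        ≤ f t * deriv f t * (l * t) :=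
          mul_le_mul_of_nonneg_right h2 (mul_nonneg hl0 ht)
      _ = l * (f t * deriv f t * t) := by ring
  · intro l t hl ht
    have h1 : t ≤ l * t := by nlinarith
    have h2 : f t * deriv f t ≤ f (l * t) * deriv f (l * t) := gmono h1
    calc l * (f t * deriv f t * t)
        = f t * deriv f t * (l * t) := by ring
      _ ≤ f (l * t) * deriv f (l * t) * (l * t) :=
          mul_le_mul_of_nonneg_right h2 (mul_nonneg (by linarith) ht)
end

section
/- For every α ≥ 0, λ ∈ [0,1], and t ≥ 0, it holds that λ^α · f(t)^α ≤ f(λt)^α ≤ λ^(α/2) · f(t)^α. -/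
/-!
For `s ≥ 0` put `u s = f s * √(1 + 2 f(s)²)`. Then `u' = 1 + 2f²/(1 + 2f²) ∈ [1, 2]` and `u 0 = 0`,
so `s ≤ u s ≤ 2 s`, i.e. `s f'(s) ≤ f s ≤ 2 s f'(s)`. The first inequality makes `f s / s`
nonincreasing and the second makes `f(s)² / s` nondecreasing; comparing at `λ t ≤ t` gives
`λ f t ≤ f (λ t) ≤ √λ f t`, and both bounds survive raising to the power `α ≥ 0`.
-/

open Set

lemma monotoneOn_of_hasDerivAt_nonneg {D : Set ℝ} (hD : Convex ℝ D) {g g' : ℝ → ℝ}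
    (hg : ∀ x ∈ D, HasDerivAt g (g' x) x) (hg' : ∀ x ∈ interior D, 0 ≤ g' x) :
    MonotoneOn g D :=
  monotoneOn_of_hasDerivWithinAt_nonneg hD (fun x hx ↦ (hg x hx).continuousAt.continuousWithinAt)
    (fun x hx ↦ (hg x (interior_subset hx)).hasDerivWithinAt) hg'

lemma antitoneOn_of_hasDerivAt_nonpos {D : Set ℝ} (hD : Convex ℝ D) {g g' : ℝ → ℝ}
    (hg : ∀ x ∈ D, HasDerivAt g (g' x) x) (hg' : ∀ x ∈ interior D, g' x ≤ 0) :
    AntitoneOn g D :=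
  antitoneOn_of_hasDerivWithinAt_nonpos hD (fun x hx ↦ (hg x hx).continuousAt.continuousWithinAt)
    (fun x hx ↦ (hg x (interior_subset hx)).hasDerivWithinAt) hg'

lemma le_of_hasDerivAt_le {g h g' h' : ℝ → ℝ} (hg : ∀ x, 0 ≤ x → HasDerivAt g (g' x) x)
    (hh : ∀ x, 0 ≤ x → HasDerivAt h (h' x) x) (h0 : g 0 ≤ h 0) (hle : ∀ x, 0 < x → g' x ≤ h' x)
    {x : ℝ} (hx : 0 ≤ x) : g x ≤ h x := by
  have hmono : MonotoneOn (fun x ↦ h x - g x) (Ici 0) :=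
    monotoneOn_of_hasDerivAt_nonneg (convex_Ici 0) (fun x hx ↦ (hh x hx).sub (hg x hx))
      (fun x hx ↦ by rw [interior_Ici] at hx; exact sub_nonneg.2 (hle x hx))
  have := hmono self_mem_Ici hx hx
  dsimp only at this
  linarith

lemma mul_le_of_antitoneOn_div {g : ℝ → ℝ} (hg : AntitoneOn (fun s ↦ g s / s) (Ioi 0))
    (hg0 : g 0 = 0) {l t : ℝ} (hl0 : 0 ≤ l) (hl1 : l ≤ 1) (ht : 0 ≤ t) : l * g t ≤ g (l * t) := by
  rcases hl0.eq_or_lt with rfl | hl0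
  · simp [hg0]
  rcases ht.eq_or_lt with rfl | ht
  · simp [hg0]
  have hlt : 0 < l * t := mul_pos hl0 ht
  have := hg hlt ht (mul_le_of_le_one_left ht.le hl1)
  rw [div_le_div_iff₀ ht hlt] at this
  nlinarith

lemma le_mul_of_monotoneOn_div {g : ℝ → ℝ} (hg : MonotoneOn (fun s ↦ g s / s) (Ioi 0))
    (hg0 : g 0 = 0) {l t : ℝ} (hl0 : 0 ≤ l) (hl1 : l ≤ 1) (ht : 0 ≤ t) : g (l * t) ≤ l * g t := by
  rcases hl0.eq_or_lt with rfl | hl0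
  · simp [hg0]
  rcases ht.eq_or_lt with rfl | ht
  · simp [hg0]
  have hlt : 0 < l * t := mul_pos hl0 ht
  have := hg hlt ht (mul_le_of_le_one_left ht.le hl1)
  rw [div_le_div_iff₀ hlt ht] at this
  nlinarith

lemma HasDerivAt.mul_sqrt_one_add_two_mul_sq {f : ℝ → ℝ} {x : ℝ}
    (hf : HasDerivAt f (√(1 + 2 * f x ^ 2))⁻¹ x) :
    HasDerivAt (fun s ↦ f s * √(1 + 2 * f s ^ 2)) (1 + 2 * f x ^ 2 / (1 + 2 * f x ^ 2)) x := by
  have hpos : 0 < 1 + 2 * f x ^ 2 := by positivity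
  refine (hf.mul ((((hf.pow 2).const_mul 2).const_add 1).sqrt hpos.ne')).congr_deriv ?_
  simp only [Pi.pow_apply, Nat.cast_ofNat, Nat.add_one_sub_one, pow_one]
  field_simp
  rw [Real.sq_sqrt hpos.le]

section

variable {f : ℝ → ℝ} (hf0 : f 0 = 0) (hf : ∀ t, 0 ≤ t → HasDerivAt f (√(1 + 2 * f t ^ 2))⁻¹ t)
include hf0 hf

lemma nonneg_of_hasDerivAt_inv_sqrt {t : ℝ} (ht : 0 ≤ t) : 0 ≤ f t :=
  le_of_hasDerivAt_le (fun x _ ↦ hasDerivAt_const x (0 : ℝ)) hf hf0.ge (fun x _ ↦ by positivity) ht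

lemma self_le_mul_sqrt {t : ℝ} (ht : 0 ≤ t) : t ≤ f t * √(1 + 2 * f t ^ 2) :=
  le_of_hasDerivAt_le (fun x _ ↦ hasDerivAt_id x) (fun x hx ↦ (hf x hx).mul_sqrt_one_add_two_mul_sq)
    (by simp [hf0]) (fun x _ ↦ by simp only [le_add_iff_nonneg_right]; positivity) ht

lemma mul_sqrt_le_two_mul {t : ℝ} (ht : 0 ≤ t) : f t * √(1 + 2 * f t ^ 2) ≤ 2 * t :=
  le_of_hasDerivAt_le (fun x hx ↦ (hf x hx).mul_sqrt_one_add_two_mul_sq)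
    (fun x _ ↦ (hasDerivAt_id x).const_mul 2) (by simp [hf0])
    (fun x _ ↦ by
      have : 2 * f x ^ 2 / (1 + 2 * f x ^ 2) ≤ 1 := div_le_one_of_le₀ (by linarith) (by positivity)
      simp only [mul_one]; linarith) ht

lemma antitoneOn_div_self : AntitoneOn (fun s ↦ f s / s) (Ioi 0) := by
  refine antitoneOn_of_hasDerivAt_nonpos (convex_Ioi 0)
    (fun x hx ↦ (hf x (le_of_lt hx)).div (hasDerivAt_id x) (ne_of_gt hx)) fun x hx ↦ ?_
  rw [interior_Ioi] at hx
  have hsqrt : 0 < √(1 + 2 * f x ^ 2) := Real.sqrt_pos.2 (by positivity)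
  have := self_le_mul_sqrt hf0 hf hx.le
  refine div_nonpos_of_nonpos_of_nonneg ?_ (sq_nonneg _)
  rw [mul_one, sub_nonpos, inv_mul_le_iff₀ hsqrt, mul_comm]
  exact this

lemma monotoneOn_sq_div_self : MonotoneOn (fun s ↦ f s ^ 2 / s) (Ioi 0) := by
  refine monotoneOn_of_hasDerivAt_nonneg (convex_Ioi 0)
    (fun x hx ↦ ((hf x (le_of_lt hx)).pow 2).div (hasDerivAt_id x) (ne_of_gt hx)) fun x hx ↦ ?_
  rw [interior_Ioi] at hx
  have hsqrt : 0 < √(1 + 2 * f x ^ 2) := Real.sqrt_pos.2 (by positivity)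
  have hle : f x ≤ 2 * x * (√(1 + 2 * f x ^ 2))⁻¹ := by
    rw [← div_eq_mul_inv, le_div_iff₀ hsqrt]; exact mul_sqrt_le_two_mul hf0 hf hx.le
  have hnonneg := nonneg_of_hasDerivAt_inv_sqrt hf0 hf hx.le
  refine div_nonneg ?_ (sq_nonneg _)
  simp only [Pi.pow_apply, Nat.cast_ofNat, mul_one]
  nlinarith

end

theorem stmt_13_general (f : ℝ → ℝ) (hf0 : f 0 = 0)
    (hf1 : ∀ t : ℝ, 0 ≤ t → HasDerivAt f ((1 + 2 * f t ^ 2) ^ (-(1/2) : ℝ)) t) :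
    ∀ α : ℝ, 0 ≤ α → ∀ l : ℝ, 0 ≤ l → l ≤ 1 → ∀ t : ℝ, 0 ≤ t →
      l ^ α * f t ^ α ≤ f (l * t) ^ α ∧ f (l * t) ^ α ≤ l ^ (α / 2) * f t ^ α := by
  have hf : ∀ t, 0 ≤ t → HasDerivAt f (√(1 + 2 * f t ^ 2))⁻¹ t := fun t ht ↦ by
    rw [Real.sqrt_eq_rpow, ← Real.rpow_neg (by positivity)]
    exact hf1 t ht
  intro α hα l hl0 hl1 t ht
  have hft := nonneg_of_hasDerivAt_inv_sqrt hf0 hf ht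
  have hflt := nonneg_of_hasDerivAt_inv_sqrt hf0 hf (mul_nonneg hl0 ht)
  have hlower : l * f t ≤ f (l * t) :=
    mul_le_of_antitoneOn_div (antitoneOn_div_self hf0 hf) hf0 hl0 hl1 ht
  have hupper : f (l * t) ≤ √l * f t := by
    have hsq : f (l * t) ^ 2 ≤ l * f t ^ 2 :=
      le_mul_of_monotoneOn_div (g := fun s ↦ f s ^ 2) (monotoneOn_sq_div_self hf0 hf) (by simp [hf0])
        hl0 hl1 ht
    rw [← Real.sqrt_sq hflt, ← Real.sqrt_sq hft, ← Real.sqrt_mul hl0]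
    exact Real.sqrt_le_sqrt hsq
  rw [Real.rpow_div_two_eq_sqrt α hl0, ← Real.mul_rpow hl0 hft,
    ← Real.mul_rpow (Real.sqrt_nonneg l) hft]
  exact ⟨Real.rpow_le_rpow (by positivity) hlower hα,
    Real.rpow_le_rpow hflt hupper hα⟩

theorem stmt_13 (f : ℝ → ℝ) (hf0 : f 0 = 0) (hodd : ∀ t : ℝ, f (-t) = -f t)
    (hf1 : ∀ t : ℝ, 0 ≤ t → HasDerivAt f ((1 + 2 * f t ^ 2) ^ (-(1/2) : ℝ)) t) :
    ∀ α : ℝ, 0 ≤ α → ∀ l : ℝ, 0 ≤ l → l ≤ 1 → ∀ t : ℝ, 0 ≤ t →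
      l ^ α * f t ^ α ≤ f (l * t) ^ α ∧ f (l * t) ^ α ≤ l ^ (α / 2) * f t ^ α :=
  stmt_13_general f hf0 hf1
end

section
/- For every α ≥ 0, λ ≥ 1, and t ≥ 0, it holds that λ^(α/2) · f(t)^α ≤ f(λt)^α ≤ λ^α · f(t)^α. -/
/-- Monotonicity of `y ↦ y * (1 + 2y²)^(-1/2)` on nonnegative reals. -/
lemma phi_mono_aux {a b : ℝ} (ha : 0 ≤ a) (hab : a ≤ b) :
    a * (1 + 2 * a ^ 2) ^ (-(1/2) : ℝ) ≤ b * (1 + 2 * b ^ 2) ^ (-(1/2) : ℝ) := by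
  have hb : 0 ≤ b := ha.trans hab
  have hA : (0:ℝ) < 1 + 2 * a ^ 2 := by positivity
  have hB : (0:ℝ) < 1 + 2 * b ^ 2 := by positivity
  have hrw : ∀ x : ℝ, 0 < x → x ^ (-(1/2) : ℝ) = (Real.sqrt x)⁻¹ := by
    intro x hx
    rw [Real.rpow_neg hx.le, Real.sqrt_eq_rpow]
  rw [hrw _ hA, hrw _ hB, ← div_eq_mul_inv, ← div_eq_mul_inv,
    div_le_div_iff₀ (Real.sqrt_pos.2 hA) (Real.sqrt_pos.2 hB)]
  rw [← Real.sqrt_sq ha, ← Real.sqrt_sq hb, ← Real.sqrt_mul (sq_nonneg a),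
    ← Real.sqrt_mul (sq_nonneg b)]
  apply Real.sqrt_le_sqrt
  nlinarith [Real.sq_sqrt (sq_nonneg a), Real.sq_sqrt (sq_nonneg b), sq_nonneg a, sq_nonneg b]

theorem stmt_14 (f : ℝ → ℝ) (hf0 : f 0 = 0) (hodd : ∀ t : ℝ, f (-t) = -f t)
    (hf1 : ∀ t : ℝ, 0 ≤ t → HasDerivAt f ((1 + 2 * f t ^ 2) ^ (-(1/2) : ℝ)) t) :
    ∀ α : ℝ, 0 ≤ α → ∀ l : ℝ, 1 ≤ l → ∀ t : ℝ, 0 ≤ t →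
      l ^ (α / 2) * f t ^ α ≤ f (l * t) ^ α ∧ f (l * t) ^ α ≤ l ^ α * f t ^ α := by
  intro α hα l hl t ht
  have hl0 : (0:ℝ) < l := lt_of_lt_of_le one_pos hl
  -- f is monotone on [0, ∞)
  have hmono : MonotoneOn f (Set.Ici 0) := by
    apply monotoneOn_of_deriv_nonneg (convex_Ici 0)
    · intro x hx
      exact (hf1 x hx).continuousAt.continuousWithinAt
    · intro x hx
      rw [interior_Ici] at hx
      exact (hf1 x hx.le).differentiableAt.differentiableWithinAt
    · intro x hx
      rw [interior_Ici] at hx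
      rw [(hf1 x hx.le).deriv]
      positivity
  have hft : 0 ≤ f t := by
    have := hmono (Set.self_mem_Ici) (Set.mem_Ici.2 ht) ht
    linarith [hf0 ▸ this]
  have hlt0 : 0 ≤ l * t := by positivity
  have htlt : t ≤ l * t := le_mul_of_one_le_left ht hl
  have hab : f t ≤ f (l * t) := hmono (Set.mem_Ici.2 ht) (Set.mem_Ici.2 hlt0) htlt
  have hfb : 0 ≤ f (l * t) := hft.trans hab
  -- derivative of s ↦ f (l * s)
  have hder2 : ∀ s : ℝ, 0 ≤ s →
      HasDerivAt (fun s => f (l * s)) ((1 + 2 * f (l * s) ^ 2) ^ (-(1/2) : ℝ) * l) s := by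
    intro s hs
    have hL : HasDerivAt (fun x : ℝ => l * x) l s := by
      simpa using (hasDerivAt_id s).const_mul l
    exact (hf1 (l * s) (by positivity)).comp s hL
  -- lower bound: l * f t ^ 2 ≤ f (l * t) ^ 2
  have hHmono : MonotoneOn (fun s => f (l * s) ^ 2 - l * f s ^ 2) (Set.Ici 0) := by
    have hds : ∀ s : ℝ, 0 ≤ s →
        HasDerivAt (fun s => f (l * s) ^ 2 - l * f s ^ 2)
          (((2:ℕ) * f (l * s) ^ 1 * ((1 + 2 * f (l * s) ^ 2) ^ (-(1/2) : ℝ) * l)) -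
            l * ((2:ℕ) * f s ^ 1 * ((1 + 2 * f s ^ 2) ^ (-(1/2) : ℝ)))) s := by
      intro s hs
      exact ((hder2 s hs).pow 2).sub (((hf1 s hs).pow 2).const_mul l)
    apply monotoneOn_of_deriv_nonneg (convex_Ici 0)
    · intro x hx
      exact (hds x hx).continuousAt.continuousWithinAt
    · intro x hx
      rw [interior_Ici] at hx
      exact (hds x hx.le).differentiableAt.differentiableWithinAt
    · intro x hx
      rw [interior_Ici] at hx
      rw [(hds x hx.le).deriv]
      have h0x : 0 ≤ f x := by
        have := hmono (Set.self_mem_Ici) (Set.mem_Ici.2 hx.le) hx.le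
        linarith [hf0 ▸ this]
      have hxx : f x ≤ f (l * x) :=
        hmono (Set.mem_Ici.2 hx.le) (Set.mem_Ici.2 (mul_nonneg hl0.le hx.le))
          (le_mul_of_one_le_left hx.le hl)
      have := phi_mono_aux h0x hxx
      push_cast
      nlinarith
  have hH : l * f t ^ 2 ≤ f (l * t) ^ 2 := by
    have := hHmono (Set.self_mem_Ici) (Set.mem_Ici.2 ht) ht
    simp only [mul_zero, hf0] at this
    nlinarith
  -- upper bound: f (l * t) ≤ l * f t
  have hKmono : MonotoneOn (fun s => l * f s - f (l * s)) (Set.Ici 0) := by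
    have hds : ∀ s : ℝ, 0 ≤ s →
        HasDerivAt (fun s => l * f s - f (l * s))
          (l * ((1 + 2 * f s ^ 2) ^ (-(1/2) : ℝ)) -
            ((1 + 2 * f (l * s) ^ 2) ^ (-(1/2) : ℝ) * l)) s := by
      intro s hs
      exact ((hf1 s hs).const_mul l).sub (hder2 s hs)
    apply monotoneOn_of_deriv_nonneg (convex_Ici 0)
    · intro x hx
      exact (hds x hx).continuousAt.continuousWithinAt
    · intro x hx
      rw [interior_Ici] at hx
      exact (hds x hx.le).differentiableAt.differentiableWithinAt
    · intro x hx
      rw [interior_Ici] at hx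
      rw [(hds x hx.le).deriv]
      have h0x : 0 ≤ f x := by
        have := hmono (Set.self_mem_Ici) (Set.mem_Ici.2 hx.le) hx.le
        linarith [hf0 ▸ this]
      have hxx : f x ≤ f (l * x) :=
        hmono (Set.mem_Ici.2 hx.le) (Set.mem_Ici.2 (mul_nonneg hl0.le hx.le))
          (le_mul_of_one_le_left hx.le hl)
      have hle : (1 + 2 * f (l * x) ^ 2) ^ (-(1/2) : ℝ) ≤
          (1 + 2 * f x ^ 2) ^ (-(1/2) : ℝ) :=
        Real.rpow_le_rpow_of_nonpos (by positivity) (by nlinarith) (by norm_num)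
      nlinarith
  have hK : f (l * t) ≤ l * f t := by
    have := hKmono (Set.self_mem_Ici) (Set.mem_Ici.2 ht) ht
    simp only [mul_zero, hf0] at this
    linarith
  constructor
  · -- lower bound
    have hsq : Real.sqrt l * f t ≤ f (l * t) := by
      rw [← Real.sqrt_sq hft, ← Real.sqrt_mul hl0.le, ← Real.sqrt_sq hfb]
      exact Real.sqrt_le_sqrt hH
    have h1 : (Real.sqrt l * f t) ^ α ≤ f (l * t) ^ α :=
      Real.rpow_le_rpow (by positivity) hsq hα
    calc l ^ (α / 2) * f t ^ α = (Real.sqrt l) ^ α * f t ^ α := by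
          rw [Real.sqrt_eq_rpow, ← Real.rpow_mul hl0.le,
            show (1/2:ℝ) * α = α / 2 by ring]
      _ = (Real.sqrt l * f t) ^ α := (Real.mul_rpow (Real.sqrt_nonneg l) hft).symm
      _ ≤ f (l * t) ^ α := h1
  · calc f (l * t) ^ α ≤ (l * f t) ^ α := Real.rpow_le_rpow hfb hK hα
      _ = l ^ α * f t ^ α := Real.mul_rpow hl0.le hft
end

section
/- The function t ↦ f(t)/t is nonincreasing on (0, ∞). -/
/-!
Since `f' > 0` and `f 0 = 0`, `f` is nonnegative and increasing on `[0, ∞)`, so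
`f' = (1 + 2 f²)^(-1/2)` is decreasing there: `f` is concave on `[0, ∞)`. For a concave function
vanishing at `0`, `f t / t` is the slope of the chord from the origin, which is nonincreasing.
-/

open Set

theorem ConcaveOn.antitoneOn_div_of_map_zero {𝕜 : Type*} [Field 𝕜] [LinearOrder 𝕜]
    [IsStrictOrderedRing 𝕜] {f : 𝕜 → 𝕜} (hf : ConcaveOn 𝕜 (Ici 0) f) (h0 : f 0 = 0) :
    AntitoneOn (fun t => f t / t) (Ioi 0) := by
  have hslope : AntitoneOn (slope f 0) {t ∈ Ici 0 | 0 < t} := hf.antitoneOn_slope_gt self_mem_Ici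
  intro s hs t ht hst
  simpa [slope_def_field, h0] using hslope ⟨le_of_lt hs, hs⟩ ⟨le_of_lt ht, ht⟩ hst

theorem AntitoneOn.concaveOn_of_hasDerivAt {D : Set ℝ} (hD : Convex ℝ D) {f f' : ℝ → ℝ}
    (hf : ∀ x ∈ D, HasDerivAt f (f' x) x) (hf' : AntitoneOn f' D) : ConcaveOn ℝ D f := by
  have hderiv : EqOn (deriv f) f' (interior D) := fun x hx => (hf x (interior_subset hx)).deriv
  refine AntitoneOn.concaveOn_of_deriv hD
    (fun x hx => (hf x hx).continuousAt.continuousWithinAt)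
    (fun x hx => (hf x (interior_subset hx)).differentiableAt.differentiableWithinAt) ?_
  exact (hf'.mono interior_subset).congr hderiv.symm

theorem antitoneOn_one_add_two_mul_sq_rpow_neg_half :
    AntitoneOn (fun u : ℝ => (1 + 2 * u ^ 2) ^ (-(1/2) : ℝ)) (Ici 0) := by
  intro u hu v hv huv
  have hsq : u ^ 2 ≤ v ^ 2 := pow_le_pow_left₀ hu huv 2
  exact Real.rpow_le_rpow_of_nonpos (by positivity) (by linarith) (by norm_num)

theorem stmt_15_general (f : ℝ → ℝ) (hf0 : f 0 = 0)
    (hf1 : ∀ t : ℝ, 0 ≤ t → HasDerivAt f ((1 + 2 * f t ^ 2) ^ (-(1/2) : ℝ)) t) :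
    AntitoneOn (fun t : ℝ => f t / t) (Set.Ioi 0) := by
  have hmono : MonotoneOn f (Ici 0) :=
    monotoneOn_of_hasDerivWithinAt_nonneg (convex_Ici 0)
      (fun t ht => (hf1 t ht).continuousAt.continuousWithinAt)
      (fun t ht => (hf1 t (interior_subset ht)).hasDerivWithinAt) (fun t _ => by positivity)
  have hnonneg : MapsTo f (Ici 0) (Ici 0) := fun t ht => hf0 ▸ hmono self_mem_Ici ht ht
  have hderiv_anti : AntitoneOn (fun t => (1 + 2 * f t ^ 2) ^ (-(1/2) : ℝ)) (Ici 0) :=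
    antitoneOn_one_add_two_mul_sq_rpow_neg_half.comp_MonotoneOn hmono hnonneg
  exact (hderiv_anti.concaveOn_of_hasDerivAt (convex_Ici 0) hf1).antitoneOn_div_of_map_zero hf0

theorem stmt_15 (f : ℝ → ℝ) (hf0 : f 0 = 0) (hodd : ∀ t : ℝ, f (-t) = -f t)
    (hf1 : ∀ t : ℝ, 0 ≤ t → HasDerivAt f ((1 + 2 * f t ^ 2) ^ (-(1/2) : ℝ)) t) :
    AntitoneOn (fun t : ℝ => f t / t) (Set.Ioi 0) :=
  stmt_15_general f hf0 hf1
end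

section
/- For every v ∈ N_p, one has I_p(v) ≥ ((p−4)/(4p)) ∫_Ω |f(v)|^p ≥ 0, where I_p(v) = (1/2)∫_Ω |∇v|² − (1/p)∫_Ω |f(v)|^p. -/
/-!
Since `f' = (1 + 2 f²)^(-1/2)`, the function `t ↦ f t * √(1 + 2 f(t)²)` has derivative
`1 + 2 f² / (1 + 2 f²) ∈ [1, 2)`, hence `|f t| * √(1 + 2 f(t)²) ≤ 2 |t|`, i.e. `f(t) f'(t) t ≥ f(t)² / 2`.
So the Nehari integrand `|f v|^(p-2) f(v) f'(v) v` dominates `|f v|^p / 2`, which gives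
`∫ |∇v|² ≥ (1/2) ∫ |f v|^p` and therefore `I_p(v) ≥ (1/4 - 1/p) ∫ |f v|^p`.
-/

open MeasureTheory

lemma HasDerivAt.of_odd_of_neg {f : ℝ → ℝ} {f' t : ℝ} (hodd : ∀ t, f (-t) = -f t)
    (h : HasDerivAt f f' (-t)) : HasDerivAt f f' t := by
  have hf : -(f ∘ Neg.neg) = f := funext fun s => by simp [hodd]
  simpa [hf] using (h.comp t (hasDerivAt_neg t)).neg

lemma Monotone.apply_mul_nonneg {f : ℝ → ℝ} (hf : Monotone f) (h0 : f 0 = 0) (t : ℝ) :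
    0 ≤ f t * t := by
  rcases le_total 0 t with ht | ht
  · exact mul_nonneg (h0 ▸ hf ht) ht
  · exact mul_nonneg_of_nonpos_of_nonpos (h0 ▸ hf ht) ht

lemma hasDerivAt_of_odd_of_hasDerivAt_nonneg {f : ℝ → ℝ} (hodd : ∀ t, f (-t) = -f t)
    (hf1 : ∀ t : ℝ, 0 ≤ t → HasDerivAt f ((1 + 2 * f t ^ 2) ^ (-(1/2) : ℝ)) t) (t : ℝ) :
    HasDerivAt f (√(1 + 2 * f t ^ 2))⁻¹ t := by
  rw [Real.sqrt_eq_rpow, ← Real.rpow_neg (by positivity)]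
  rcases le_total 0 t with ht | ht
  · exact hf1 t ht
  · have h := hf1 (-t) (neg_nonneg.2 ht)
    rw [hodd, neg_sq] at h
    exact h.of_odd_of_neg hodd

lemma hasDerivAt_mul_sqrt_one_add_two_mul_sq_s17 {f : ℝ → ℝ}
    (hf : ∀ t, HasDerivAt f (√(1 + 2 * f t ^ 2))⁻¹ t) (t : ℝ) :
    HasDerivAt (fun r => f r * √(1 + 2 * f r ^ 2)) (1 + 2 * f t ^ 2 / (1 + 2 * f t ^ 2)) t := by
  have hpos : 0 < 1 + 2 * f t ^ 2 := by positivity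
  have hsq : HasDerivAt (fun r => √(1 + 2 * f r ^ 2))
      (2 * (2 * f t * (√(1 + 2 * f t ^ 2))⁻¹) / (2 * √(1 + 2 * f t ^ 2))) t := by
    simpa using ((((hf t).pow 2).const_mul 2).const_add 1).sqrt hpos.ne'
  refine ((hf t).mul hsq).congr_deriv ?_
  have hw : √(1 + 2 * f t ^ 2) ^ 2 = 1 + 2 * f t ^ 2 := Real.sq_sqrt hpos.le
  field_simp
  rw [hw]

lemma abs_mul_sqrt_one_add_two_mul_sq_le {f : ℝ → ℝ} (hf0 : f 0 = 0)
    (hf : ∀ t, HasDerivAt f (√(1 + 2 * f t ^ 2))⁻¹ t) (t : ℝ) :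
    |f t| * √(1 + 2 * f t ^ 2) ≤ 2 * |t| := by
  have hderiv_le : ∀ r ∈ Set.univ,
      ‖deriv (fun r => f r * √(1 + 2 * f r ^ 2)) r‖ ≤ 2 := by
    intro r _
    have hpos : 0 < 1 + 2 * f r ^ 2 := by positivity
    have hfrac : 2 * f r ^ 2 / (1 + 2 * f r ^ 2) ≤ 1 := by
      rw [div_le_one hpos]
      linarith
    rw [(hasDerivAt_mul_sqrt_one_add_two_mul_sq_s17 hf r).deriv, Real.norm_eq_abs,
      abs_of_nonneg (by positivity)]
    linarith
  have := Convex.norm_image_sub_le_of_norm_deriv_le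
    (fun r _ => (hasDerivAt_mul_sqrt_one_add_two_mul_sq_s17 hf r).differentiableAt)
    hderiv_le convex_univ (Set.mem_univ 0) (Set.mem_univ t)
  simpa [hf0, abs_mul, abs_of_nonneg (Real.sqrt_nonneg _)] using this

lemma half_abs_rpow_le_abs_rpow_mul_deriv_mul {f : ℝ → ℝ} (hf0 : f 0 = 0)
    (hf : ∀ t, HasDerivAt f (√(1 + 2 * f t ^ 2))⁻¹ t) {p : ℝ} (hp : p ≠ 0) (t : ℝ) :
    1 / 2 * |f t| ^ p ≤ |f t| ^ (p - 2) * f t * deriv f t * t := by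
  have hmono : Monotone f :=
    monotone_of_hasDerivAt_nonneg hf fun r => inv_nonneg.2 (Real.sqrt_nonneg _)
  have hsign : f t * t = |f t| * |t| := by
    rw [← abs_mul, abs_of_nonneg (hmono.apply_mul_nonneg hf0 t)]
  have hbound := abs_mul_sqrt_one_add_two_mul_sq_le hf0 hf t
  rw [(hf t).deriv, ← sq_abs (f t)]
  rw [← sq_abs (f t)] at hbound
  set s := |f t|
  set w := √(1 + 2 * s ^ 2)
  have hw : 0 < w := Real.sqrt_pos.2 (by positivity)
  -- `s ^ p = s ^ (p - 2) * s ^ 2` also at `s = 0`, because `p ≠ 0`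
  have hsp : s ^ p = s ^ (p - 2) * s ^ 2 := by
    rw [← Real.rpow_natCast s 2, ← Real.rpow_add' (abs_nonneg _) (by simpa using hp)]
    norm_num [s]
  have hsq : 1 / 2 * s ^ 2 ≤ s * |t| / w := by
    rw [le_div_iff₀ hw]
    nlinarith [abs_nonneg (f t)]
  calc 1 / 2 * s ^ p = s ^ (p - 2) * (1 / 2 * s ^ 2) := by rw [hsp]; ring
    _ ≤ s ^ (p - 2) * (s * |t| / w) := by gcongr
    _ = s ^ (p - 2) * f t * w⁻¹ * t := by rw [← hsign]; ring

theorem stmt_17_general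
    (N : ℕ)
    (Ω : Set (EuclideanSpace ℝ (Fin N)))
    (f : ℝ → ℝ) (hf0 : f 0 = 0) (hodd : ∀ t : ℝ, f (-t) = -f t)
    (hf1 : ∀ t : ℝ, 0 ≤ t → HasDerivAt f ((1 + 2 * f t ^ 2) ^ (-(1/2) : ℝ)) t)
    (p : ℝ) (hp : 4 < p)
    (v : EuclideanSpace ℝ (Fin N) → ℝ)
    (hint2 : IntegrableOn (fun x => |f (v x)| ^ p) Ω volume)
    (hint3 : IntegrableOn
      (fun x => |f (v x)| ^ (p - 2) * f (v x) * deriv f (v x) * v x) Ω volume)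
    -- v belongs to the Nehari manifold N_p
    (hNehari : ∫ x in Ω, ‖gradient v x‖ ^ 2
        = ∫ x in Ω, |f (v x)| ^ (p - 2) * f (v x) * deriv f (v x) * v x) :
    ((p - 4) / (4 * p)) * ∫ x in Ω, |f (v x)| ^ p
      ≤ (1/2) * (∫ x in Ω, ‖gradient v x‖ ^ 2) - (1/p) * ∫ x in Ω, |f (v x)| ^ p
    ∧ 0 ≤ ((p - 4) / (4 * p)) * ∫ x in Ω, |f (v x)| ^ p := by
  have hp0 : 0 < p := by linarith
  have hf := hasDerivAt_of_odd_of_hasDerivAt_nonneg hodd hf1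
  have hgrad : 1 / 2 * ∫ x in Ω, |f (v x)| ^ p ≤ ∫ x in Ω, ‖gradient v x‖ ^ 2 := by
    rw [hNehari, ← integral_const_mul]
    exact integral_mono (hint2.const_mul _) hint3
      fun x => half_abs_rpow_le_abs_rpow_mul_deriv_mul hf0 hf hp0.ne' (v x)
  have hint_nonneg : 0 ≤ ∫ x in Ω, |f (v x)| ^ p :=
    integral_nonneg fun x => Real.rpow_nonneg (abs_nonneg _) _
  have hcoeff : (p - 4) / (4 * p) = 1 / 4 - 1 / p := by field_simp
  refine ⟨?_, mul_nonneg (div_nonneg (by linarith) (by linarith)) hint_nonneg⟩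
  rw [hcoeff]
  linarith

theorem stmt_17
    (N : ℕ) (hN : 3 ≤ N)
    (Ω : Set (EuclideanSpace ℝ (Fin N)))
    (hΩo : IsOpen Ω) (hΩb : Bornology.IsBounded Ω)
    (f : ℝ → ℝ) (hf0 : f 0 = 0) (hodd : ∀ t : ℝ, f (-t) = -f t)
    (hf1 : ∀ t : ℝ, 0 ≤ t → HasDerivAt f ((1 + 2 * f t ^ 2) ^ (-(1/2) : ℝ)) t)
    (p : ℝ) (hp : 4 < p) (hp2 : p ≤ 4 * (N:ℝ) / ((N:ℝ) - 2))
    (v : EuclideanSpace ℝ (Fin N) → ℝ)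
    (hv0 : ¬ (∀ᵐ x ∂(volume.restrict Ω), v x = 0))
    (hint1 : IntegrableOn (fun x => ‖gradient v x‖ ^ 2) Ω volume)
    (hint2 : IntegrableOn (fun x => |f (v x)| ^ p) Ω volume)
    (hint3 : IntegrableOn
      (fun x => |f (v x)| ^ (p - 2) * f (v x) * deriv f (v x) * v x) Ω volume)
    -- v belongs to the Nehari manifold N_p
    (hNehari : ∫ x in Ω, ‖gradient v x‖ ^ 2
        = ∫ x in Ω, |f (v x)| ^ (p - 2) * f (v x) * deriv f (v x) * v x) :
    ((p - 4) / (4 * p)) * ∫ x in Ω, |f (v x)| ^ p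
      ≤ (1/2) * (∫ x in Ω, ‖gradient v x‖ ^ 2) - (1/p) * ∫ x in Ω, |f (v x)| ^ p
    ∧ 0 ≤ ((p - 4) / (4 * p)) * ∫ x in Ω, |f (v x)| ^ p :=
  stmt_17_general N Ω f hf0 hodd hf1 p hp v hint2 hint3 hNehari
end
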